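/- Suppose distances from all vertices to q are distinct and every vertex among the N_q nearest neighbors of q is K_h-reachable from every other (i.e., EH(N_{i,q}, N_{j,q}, q, G) ≤ K_h for all 1 ≤ i,j ≤ N_q), and the entry point is N_{1,q} (or any vertex among the N_q nearest). Then greedy beam search with query q, result-list size L = K_h ≥ N_q, and k ≤ N_q returns exactly the k nearest neighbors of q, i.e., recall@k = 100%. -/

import Mathlib

attribute [local instance] Classical.propDecidable

/-- The state of greedy beam search (Algorithm 1): the set `C` of unexpanded
candidates, the result set `R`, and the set of visited vertices. -/
structure SState (V : Type*) where
  C : Finset V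
  R : Finset V
  visited : Finset V

variable {V : Type*} [Fintype V] [DecidableEq V]

/-- `rank dist x = i` means `x` is the `i`-th nearest vertex to the query
(with respect to the distance-to-query function `dist`), i.e. `F_{x,q} = i`. -/
noncomputable def rank (dist : V → ℝ) (x : V) : ℕ :=
  (Finset.univ.filter fun y => dist y ≤ dist x).card

/-- Keep only the `L` closest (to the query) elements of `R`. -/
noncomputable def truncate (dist : V → ℝ) (L : ℕ) (R : Finset V) : Finset V :=
  R.filter fun x => (R.filter fun y => dist y ≤ dist x).card ≤ L

/-- An element of `C` closest to the query. -/
noncomputable def argmin (dist : V → ℝ) (C : Finset V) (h : C.Nonempty) : V :=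
  (C.exists_min_image dist h).choose

/-- Insertion condition of Algorithm 1: `|R| < L` or `δ(v,q) < d_max`. -/
def insertCond (dist : V → ℝ) (L : ℕ) (R : Finset V) (v : V) : Prop :=
  R.card < L ∨ ∃ x ∈ R, dist v < dist x

/-- Inner loop of Algorithm 1: process the (unvisited) neighbors of the popped
vertex one by one, inserting them into `C` and `R` and truncating `R` to its
`L` closest elements. -/
noncomputable def insertLoop (dist : V → ℝ) (L : ℕ) : List V → SState V → SState V
  | [], s => s
  | v :: vs, s =>
    insertLoop dist L vs <|
      if v ∈ s.visited then s
      else if insertCond dist L s.R v then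
        ⟨insert v s.C, truncate dist L (insert v s.R), insert v s.visited⟩
      else ⟨s.C, s.R, insert v s.visited⟩

/-- Main loop of Algorithm 1 (greedy beam search) with explicit fuel.
At each step the closest unexpanded candidate `u` is popped; the loop breaks if
`δ(u,q) > d_max` (i.e. every element of the nonempty `R` is strictly closer
than `u`), and otherwise expands `u`. -/
noncomputable def gloop (Adj : V → V → Prop) (dist : V → ℝ) (L : ℕ) :
    ℕ → SState V → SState V
  | 0, s => s
  | n + 1, s =>
    if hC : s.C.Nonempty then
      let u := argmin dist s.C hC
      if s.R.Nonempty ∧ ∀ x ∈ s.R, dist x < dist u then s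
      else
        gloop Adj dist L n
          (insertLoop dist L ((Finset.univ.filter fun v => Adj u v).toList)
            ⟨s.C.erase u, s.R, s.visited⟩)
    else s

/-- Greedy beam search on the graph `Adj` with distance-to-query `dist`,
result-list size `L` and entry point `ep`. -/
noncomputable def search (Adj : V → V → Prop) (dist : V → ℝ) (L : ℕ) (ep : V) : SState V :=
  gloop Adj dist L (Fintype.card V + 1) ⟨{ep}, {ep}, {ep}⟩

/-- Adjacency of `NG_{S,q}`, the subgraph of `Adj` induced by the `S` nearest
vertices to the query. -/
def AdjS (Adj : V → V → Prop) (dist : V → ℝ) (S : ℕ) (a b : V) : Prop :=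
  Adj a b ∧ rank dist a ≤ S ∧ rank dist b ≤ S

/-- `p` is a directed path from `u` to `v` in the graph `Adj`. -/
def IsPathFrom (Adj : V → V → Prop) (u v : V) (p : List V) : Prop :=
  p.head? = some u ∧ p.getLast? = some v ∧ p.Chain' Adj

/-- Escape Hardness `EH(u,v,q,G)`: the minimum, over directed paths `p` from
`u` to `v` in `G`, of the maximum rank (w.r.t. distance to the query) of a
vertex on `p`; it is `⊤` (infinity) if `v` is unreachable from `u`. -/
noncomputable def EH (Adj : V → V → Prop) (rk : V → ℕ) (u v : V) : ℕ∞ :=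
  sInf {n : ℕ∞ | ∃ p : List V, IsPathFrom Adj u v p ∧ n = ((p.map rk).foldr max 0 : ℕ)}

/-! The search keeps every visited vertex of rank `≤ L` in `R`, and each such vertex is either
still a candidate or already expanded. When it halts no candidate of rank `≤ L` is left, since the
closest candidate would then lie in `R` and be strictly farther than every element of `R`; so the
visited set is closed under edges leaving vertices of rank `≤ L`. Following a path of rank `≤ K_h`
from the entry point, every one of the `N_q` nearest vertices is visited and hence lies in `R`, and
then the `k` closest elements of `R` are the `k` nearest vertices. The loop has enough fuel because
each expansion adds a vertex to the set of visited non-candidates. -/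

section BeamSearch

open Finset

variable {V : Type*}

section Rank

variable [Fintype V] (dist : V → ℝ)

theorem rank_le_rank {x y : V} (h : dist y ≤ dist x) : rank dist y ≤ rank dist x :=
  card_le_card fun _ hz => mem_filter.mpr ⟨mem_univ _, (mem_filter.mp hz).2.trans h⟩

theorem card_filter_dist_le_le_rank (S : Finset V) (x : V) :
    #(S.filter fun y => dist y ≤ dist x) ≤ rank dist x :=
  card_le_card fun z hz => by simp_all

theorem card_filter_dist_lt_add_one {dist : V → ℝ} (hinj : Function.Injective dist) (x : V) :
    #(univ.filter fun y => dist y < dist x) + 1 = rank dist x := by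
  have : (univ.filter fun y => dist y ≤ dist x) =
      insert x (univ.filter fun y => dist y < dist x) := by
    ext y
    simp only [mem_filter, mem_univ, true_and, mem_insert, le_iff_lt_or_eq, hinj.eq_iff]
    tauto
  rw [rank, this, card_insert_of_notMem (by simp)]

end Rank

section Truncate

variable [Fintype V] {dist : V → ℝ} {L : ℕ} {R : Finset V} {v : V}

theorem mem_truncate_of_rank_le (hv : v ∈ R) (hrk : rank dist v ≤ L) : v ∈ truncate dist L R :=
  mem_filter.mpr ⟨hv, (card_filter_dist_le_le_rank dist R v).trans hrk⟩

theorem insertCond_of_rank_le [DecidableEq V] (hv : v ∉ R) (hrk : rank dist v ≤ L) :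
    insertCond dist L R v := by
  by_contra h
  simp only [insertCond, not_or, not_lt, not_exists, not_and] at h
  have hsub : insert v R ⊆ univ.filter fun y => dist y ≤ dist v := fun z hz => by
    rcases mem_insert.mp hz with rfl | hz
    · simp
    · simpa using h.2 z hz
  have : #R + 1 ≤ rank dist v := card_insert_of_notMem hv ▸ card_le_card hsub
  omega

theorem mem_truncate_iff_rank_le [DecidableEq V] (hinj : Function.Injective dist) {k : ℕ}
    (hR : ∀ y, rank dist y ≤ k → y ∈ R) (x : V) :
    x ∈ truncate dist k R ↔ rank dist x ≤ k := by
  refine ⟨fun hx => ?_, fun hx => mem_truncate_of_rank_le (hR x hx) hx⟩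
  by_contra! hxk
  obtain ⟨hxR, hcard⟩ := mem_filter.mp hx
  -- The `rank z - 1 ≥ k` vertices strictly nearer than `z`, the nearest vertex of rank `> k`,
  -- all lie in `R` and are nearer than `x`.
  obtain ⟨z, hz, hzmin⟩ := (univ.filter fun y => k < rank dist y).exists_min_image dist
    ⟨x, by simpa using hxk⟩
  have hzk : k < rank dist z := (mem_filter.mp hz).2
  have hzx : dist z ≤ dist x := hzmin x (by simpa using hxk)
  have hsub : insert x (univ.filter fun y => dist y < dist z) ⊆
      R.filter fun y => dist y ≤ dist x := by
    intro y hy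
    rcases mem_insert.mp hy with rfl | hy
    · simp [hxR]
    · have hyz : dist y < dist z := (mem_filter.mp hy).2
      have hyk : rank dist y ≤ k := by
        by_contra! hyk
        exact (hzmin y (by simpa using hyk)).not_gt hyz
      exact mem_filter.mpr ⟨hR y hyk, hyz.le.trans hzx⟩
  have hxz : x ∉ univ.filter fun y => dist y < dist z := by simpa using hzx
  have hcount := card_le_card hsub
  rw [card_insert_of_notMem hxz, card_filter_dist_lt_add_one hinj] at hcount
  omega

end Truncate

section Insertion

variable [DecidableEq V] {dist : V → ℝ} {L : ℕ}

noncomputable def insertStep (dist : V → ℝ) (L : ℕ) (v : V) (s : SState V) : SState V :=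
  if v ∈ s.visited then s
  else if insertCond dist L s.R v then
    ⟨insert v s.C, truncate dist L (insert v s.R), insert v s.visited⟩
  else ⟨s.C, s.R, insert v s.visited⟩

theorem insertLoop_cons (v : V) (vs : List V) (s : SState V) :
    insertLoop dist L (v :: vs) s = insertLoop dist L vs (insertStep dist L v s) := rfl

variable {v w : V} {s : SState V}

theorem insertStep_visited : (insertStep dist L v s).visited = insert v s.visited := by
  unfold insertStep
  split_ifs with h <;> simp [h]

theorem C_subset_insertStep_C : s.C ⊆ (insertStep dist L v s).C := by
  unfold insertStep
  split_ifs <;> simp [subset_insert]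

theorem mem_C_of_mem_insertStep_C (hw : w ∈ (insertStep dist L v s).C) (hws : w ∈ s.visited) :
    w ∈ s.C := by
  unfold insertStep at hw
  split_ifs at hw with hv
  · exact hw
  · exact (mem_insert.mp hw).resolve_left (by rintro rfl; exact hv hws)
  · exact hw

theorem insertLoop_visited (l : List V) (s : SState V) :
    (insertLoop dist L l s).visited = s.visited ∪ l.toFinset := by
  induction l generalizing s with
  | nil => simp [insertLoop]
  | cons v vs ih =>
    rw [insertLoop_cons, ih, insertStep_visited]
    ext; simp

theorem C_subset_insertLoop_C (l : List V) (s : SState V) : s.C ⊆ (insertLoop dist L l s).C := by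
  induction l generalizing s with
  | nil => exact subset_rfl
  | cons v vs ih => exact C_subset_insertStep_C.trans (ih _)

theorem mem_C_of_mem_insertLoop_C {l : List V} {s : SState V}
    (hw : w ∈ (insertLoop dist L l s).C) (hws : w ∈ s.visited) : w ∈ s.C := by
  induction l generalizing s with
  | nil => exact hw
  | cons v vs ih =>
    refine mem_C_of_mem_insertStep_C (ih hw ?_) hws
    rw [insertStep_visited]
    exact mem_insert_of_mem hws

end Insertion

section InsertionInvariant

variable [Fintype V] [DecidableEq V] {dist : V → ℝ} {L : ℕ} {v : V} {s : SState V}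

structure SState.InsertInv (dist : V → ℝ) (L : ℕ) (s : SState V) : Prop where
  R_subset : s.R ⊆ s.visited
  C_subset : s.C ⊆ s.visited
  mem_R : ∀ v ∈ s.visited, rank dist v ≤ L → v ∈ s.R

theorem mem_insertStep_C (hs : s.InsertInv dist L) (hv : v ∉ s.visited) (hrk : rank dist v ≤ L) :
    v ∈ (insertStep dist L v s).C := by
  have hcond : insertCond dist L s.R v := insertCond_of_rank_le (fun h => hv (hs.R_subset h)) hrk
  simp [insertStep, hv, hcond]

theorem SState.InsertInv.insertStep (hs : s.InsertInv dist L) :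
    (insertStep dist L v s).InsertInv dist L := by
  unfold _root_.insertStep
  split_ifs with hv hcond
  · exact hs
  · refine ⟨fun z hz => ?_, insert_subset_insert _ hs.C_subset, fun z hz hrk => ?_⟩
    · exact insert_subset_insert _ hs.R_subset (filter_subset _ _ hz)
    · refine mem_truncate_of_rank_le ?_ hrk
      rcases mem_insert.mp hz with rfl | hz
      · exact mem_insert_self _ _
      · exact mem_insert_of_mem (hs.mem_R z hz hrk)
  · refine ⟨hs.R_subset.trans (subset_insert _ _), hs.C_subset.trans (subset_insert _ _),
      fun z hz hrk => ?_⟩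
    rcases mem_insert.mp hz with rfl | hz
    · exact absurd (insertCond_of_rank_le (fun h => hv (hs.R_subset h)) hrk) hcond
    · exact hs.mem_R z hz hrk

theorem SState.InsertInv.insertLoop {l : List V} {s : SState V} (hs : s.InsertInv dist L) :
    (_root_.insertLoop dist L l s).InsertInv dist L := by
  induction l generalizing s with
  | nil => exact hs
  | cons v vs ih => exact ih hs.insertStep

theorem mem_insertLoop_C {l : List V} {s : SState V} (hs : s.InsertInv dist L) (hv : v ∈ l)
    (hvs : v ∉ s.visited) (hrk : rank dist v ≤ L) : v ∈ (insertLoop dist L l s).C := by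
  induction l generalizing s with
  | nil => simp at hv
  | cons w ws ih =>
    rw [insertLoop_cons]
    by_cases hvw : v = w
    · subst hvw
      exact C_subset_insertLoop_C _ _ (mem_insertStep_C hs hvs hrk)
    · refine ih hs.insertStep (List.mem_of_ne_of_mem hvw hv) ?_
      simpa [insertStep_visited, hvw] using hvs

end InsertionInvariant

theorem argmin_mem (dist : V → ℝ) (C : Finset V) (h : C.Nonempty) : argmin dist C h ∈ C :=
  (C.exists_min_image dist h).choose_spec.1

theorem argmin_le (dist : V → ℝ) (C : Finset V) (h : C.Nonempty) {y : V} (hy : y ∈ C) :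
    dist (argmin dist C h) ≤ dist y :=
  (C.exists_min_image dist h).choose_spec.2 y hy

section SearchLoop

variable [Fintype V] {Adj : V → V → Prop} {dist : V → ℝ} {L : ℕ}

structure SState.SearchInv (Adj : V → V → Prop) (dist : V → ℝ) (L : ℕ) (s : SState V) : Prop
    extends s.InsertInv dist L where
  mem_C_or_expanded : ∀ v ∈ s.visited, rank dist v ≤ L →
    v ∈ s.C ∨ ∀ w, Adj v w → w ∈ s.visited

def SState.Halted (dist : V → ℝ) (s : SState V) : Prop :=
  ∀ hC : s.C.Nonempty, s.R.Nonempty ∧ ∀ x ∈ s.R, dist x < dist (argmin dist s.C hC)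

theorem SState.SearchInv.adj_mem_visited_of_halted {s : SState V} (hs : s.SearchInv Adj dist L)
    (hh : s.Halted dist) {v : V} (hv : v ∈ s.visited) (hrk : rank dist v ≤ L) {w : V}
    (hvw : Adj v w) : w ∈ s.visited := by
  refine (hs.mem_C_or_expanded v hv hrk).elim (fun hvC => ?_) (· w hvw)
  have hC : s.C.Nonempty := ⟨v, hvC⟩
  set u := argmin dist s.C hC
  have huR : u ∈ s.R := hs.mem_R u (hs.C_subset (argmin_mem dist s.C hC))
    ((rank_le_rank dist (argmin_le dist s.C hC hvC)).trans hrk)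
  exact absurd ((hh hC).2 u huR) (lt_irrefl _)

section Expand

variable [DecidableEq V]

noncomputable def expand (Adj : V → V → Prop) (dist : V → ℝ) (L : ℕ) (s : SState V) (u : V) :
    SState V :=
  insertLoop dist L ((univ.filter fun v => Adj u v).toList) ⟨s.C.erase u, s.R, s.visited⟩

theorem gloop_succ (n : ℕ) (s : SState V) :
    gloop Adj dist L (n + 1) s =
      if hC : s.C.Nonempty then
        if s.R.Nonempty ∧ ∀ x ∈ s.R, dist x < dist (argmin dist s.C hC) then s
        else gloop Adj dist L n (expand Adj dist L s (argmin dist s.C hC))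
      else s := rfl

variable {s : SState V} {u : V}

theorem expand_visited : (expand Adj dist L s u).visited = s.visited ∪ univ.filter (Adj u) := by
  simp [expand, insertLoop_visited]

theorem SState.SearchInv.expand (hs : s.SearchInv Adj dist L) (hu : u ∈ s.C) :
    (_root_.expand Adj dist L s u).SearchInv Adj dist L := by
  have hbase : SState.InsertInv dist L ⟨s.C.erase u, s.R, s.visited⟩ :=
    ⟨hs.R_subset, (erase_subset _ _).trans hs.C_subset, hs.mem_R⟩
  refine ⟨hbase.insertLoop, fun w hw hrk => ?_⟩
  have hvis : s.visited ⊆ (_root_.expand Adj dist L s u).visited := by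
    rw [expand_visited]; exact subset_union_left
  by_cases hws : w ∈ s.visited
  · rcases hs.mem_C_or_expanded w hws hrk with hwC | hexp
    · by_cases hwu : w = u
      · subst hwu
        exact Or.inr fun z hz => by rw [expand_visited]; simp [hz]
      · exact Or.inl (C_subset_insertLoop_C _ _ (mem_erase.mpr ⟨hwu, hwC⟩))
    · exact Or.inr fun z hz => hvis (hexp z hz)
  · refine Or.inl (mem_insertLoop_C hbase ?_ hws hrk)
    rw [expand_visited] at hw
    simpa [hws] using hw

theorem card_visited_sdiff_C_lt_expand (hs : s.SearchInv Adj dist L) (hu : u ∈ s.C) :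
    #(s.visited \ s.C) <
      #((expand Adj dist L s u).visited \ (expand Adj dist L s u).C) := by
  have hsub : insert u (s.visited \ s.C) ⊆
      (expand Adj dist L s u).visited \ (expand Adj dist L s u).C := by
    intro z hz
    have hzs : z ∈ s.visited := by
      rcases mem_insert.mp hz with rfl | hz
      · exact hs.C_subset hu
      · exact (mem_sdiff.mp hz).1
    refine mem_sdiff.mpr ⟨by rw [expand_visited]; exact mem_union_left _ hzs, fun hzC => ?_⟩
    have := mem_C_of_mem_insertLoop_C hzC hzs
    rcases mem_insert.mp hz with rfl | hz
    · simp at this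
    · exact (mem_sdiff.mp hz).2 (mem_of_mem_erase this)
  calc #(s.visited \ s.C) < #(insert u (s.visited \ s.C)) :=
        card_lt_card (ssubset_insert fun h => (mem_sdiff.mp h).2 hu)
    _ ≤ _ := card_le_card hsub

theorem gloop_induction {P : SState V → Prop}
    (hP : ∀ s u, P s → P (expand Adj dist L s u))
    (n : ℕ) {s : SState V} (hs : s.SearchInv Adj dist L) (hPs : P s) :
    (gloop Adj dist L n s).SearchInv Adj dist L ∧ P (gloop Adj dist L n s) := by
  induction n generalizing s with
  | zero => exact ⟨hs, hPs⟩
  | succ n ih =>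
    rw [gloop_succ]
    split_ifs with hC
    · exact ⟨hs, hPs⟩
    · have hu := argmin_mem dist s.C hC
      exact ih (hs.expand hu) (hP _ _ hPs)
    · exact ⟨hs, hPs⟩

theorem halted_gloop {n : ℕ} {s : SState V} (hs : s.SearchInv Adj dist L)
    (hn : Fintype.card V < n + #(s.visited \ s.C)) : (gloop Adj dist L n s).Halted dist := by
  induction n generalizing s with
  | zero => exact absurd (card_le_univ (s.visited \ s.C)) (by omega)
  | succ n ih =>
    rw [gloop_succ]
    split_ifs with hC hstop
    · exact fun _ => hstop
    · have hu := argmin_mem dist s.C hC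
      exact ih (hs.expand hu) (by have := card_visited_sdiff_C_lt_expand hs hu; omega)
    · exact fun h => absurd h hC

end Expand

end SearchLoop

section Paths

variable {Adj : V → V → Prop} {u v : V} {p : List V}

theorem IsPathFrom.mem_of_closed {S : Set V} {P : V → Prop}
    (hS : ∀ x ∈ S, P x → ∀ y, Adj x y → y ∈ S) (hp : IsPathFrom Adj u v p) (hP : ∀ x ∈ p, P x)
    (hu : u ∈ S) : v ∈ S := by
  have hchain : p.IsChain fun x y => P x ∧ Adj x y :=
    hp.2.2.imp_of_mem_imp fun x _ hx _ hxy => ⟨hP x hx, hxy⟩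
  refine hchain.induction (· ∈ S) p (fun x y hxy hx => hS x hx hxy.1 y hxy.2) (fun hne => ?_) v
    (List.mem_of_getLast? hp.2.1)
  rwa [(List.head_eq_iff_head?_eq_some hne).mpr hp.1]

theorem exists_isPathFrom_of_EH_le {rk : V → ℕ} {n : ℕ} (h : EH Adj rk u v ≤ n) :
    ∃ p, IsPathFrom Adj u v p ∧ ∀ x ∈ p, rk x ≤ n := by
  obtain ⟨_, ⟨p, hp, rfl⟩, hlt⟩ :=
    sInf_lt_iff.mp (h.trans_lt (ENat.natCast_lt_natCast.mpr n.lt_succ_self))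
  have hmax : (p.map rk).foldr max 0 ≤ n := Nat.lt_succ_iff.mp (ENat.natCast_lt_natCast.mp hlt)
  exact ⟨p, hp, fun x hx => (List.le_max_of_le (List.mem_map_of_mem hx) le_rfl).trans hmax⟩

end Paths

end BeamSearch

/-- If every vertex among the `N_q` nearest neighbors of `q` is
`K_h`-reachable from every other (`EH(N_{i,q}, N_{j,q}, q, G) ≤ K_h` for all
`1 ≤ i, j ≤ N_q`), and the entry point is among the `N_q` nearest, then greedy
beam search with result-list size `L = K_h ≥ N_q` and `k ≤ N_q` returns exactly
the `k` nearest neighbors of `q` (recall@k = 100%): the `k` closest points of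
the final result set `R` are exactly the vertices of rank `≤ k`. -/
theorem greedy_search_exact_recall
    (Adj : V → V → Prop) (dist : V → ℝ) (hinj : Function.Injective dist)
    (Nq Kh k : ℕ) (hNK : Nq ≤ Kh) (hk : k ≤ Nq)
    (hEH : ∀ u v : V, rank dist u ≤ Nq → rank dist v ≤ Nq →
      EH Adj (rank dist) u v ≤ (Kh : ℕ∞))
    (e : V) (he : rank dist e ≤ Nq) :
    ∀ x : V, x ∈ truncate dist k (search Adj dist Kh e).R ↔ rank dist x ≤ k := by
  have hinit : SState.SearchInv Adj dist Kh ⟨{e}, {e}, {e}⟩ :=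
    ⟨⟨subset_rfl, subset_rfl, fun _ hv _ => hv⟩, fun _ hv _ => Or.inl hv⟩
  obtain ⟨hinv, he_mem⟩ := gloop_induction (P := fun s => e ∈ s.visited)
    (fun _ _ he => by rw [expand_visited]; exact Finset.mem_union_left _ he)
    (Fintype.card V + 1) hinit (Finset.mem_singleton_self e)
  have hhalt : (search Adj dist Kh e).Halted dist := halted_gloop hinit (by simp)
  have hvisited (t : V) (ht : rank dist t ≤ Nq) : t ∈ (search Adj dist Kh e).visited := by
    obtain ⟨p, hp, hrk⟩ := exists_isPathFrom_of_EH_le (hEH e t he ht)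
    exact hp.mem_of_closed (S := ↑(search Adj dist Kh e).visited)
      (fun _ hx hxr _ hxy => hinv.adj_mem_visited_of_halted hhalt hx hxr hxy) hrk he_mem
  exact mem_truncate_iff_rank_le hinj fun t ht =>
    hinv.mem_R t (hvisited t (ht.trans hk)) ((ht.trans hk).trans hNK)
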